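/- arXiv:1304.7539 — 2 statements merged into one kernel-verified Lean document; each statement's English description precedes it below -/
import Mathlib

section
/- Let N ∈ ℕ and let h₁,…,h_N ∈ ℂ be window weights with Σ_n |h_n|² = 1 and Σ_n |h_n|² c_n² > 0, where c_n = n − (N+1)/2; set τ = (Σ_n |h_n|² c_n²)^{−1/2}. For every ω ∈ ℝ, the minimum over all (g₁,g₂) ∈ ℂ² with |g₁|² + |g₂|² = 1 of ‖g₁ x(ω) + g₂ τ x′(ω)‖² equals 1 − τ·|Σ_{n=1}^N |h_n|² c_n|; in particular this squared smallest singular value of the tangent-plane matrix T(ω) = [x(ω), τ x′(ω)] is the same for all ω. -/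
open scoped BigOperators

/-- `c_n = n − (N+1)/2` for `n = 1,…,N` (here `n : Fin N` is zero-based). -/
noncomputable def cN (N : ℕ) (n : Fin N) : ℝ := ((n : ℝ) + 1) - ((N : ℝ) + 1) / 2

/-- Windowed sinusoid: `n`-th entry `h_n e^{iω c_n}`. -/
noncomputable def sinusoid {N : ℕ} (h : Fin N → ℂ) (ω : ℝ) : EuclideanSpace ℂ (Fin N) :=
  WithLp.toLp 2 (fun n => h n * Complex.exp (Complex.I * (ω * cN N n)))

/-- Entrywise derivative of the windowed sinusoid: `n`-th entry `i c_n h_n e^{iω c_n}`. -/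
noncomputable def sinusoidD {N : ℕ} (h : Fin N → ℂ) (ω : ℝ) : EuclideanSpace ℂ (Fin N) :=
  WithLp.toLp 2 (fun n => Complex.I * (cN N n : ℂ) * h n * Complex.exp (Complex.I * (ω * cN N n)))

/-- `τ = (Σ_n |h_n|² c_n²)^{-1/2} = 1/‖x′(ω)‖`. -/
noncomputable def tauW {N : ℕ} (h : Fin N → ℂ) : ℝ :=
  (Real.sqrt (∑ n, ‖h n‖ ^ 2 * (cN N n) ^ 2))⁻¹

/-!
Both `x(ω)` and `τ x′(ω)` are unit vectors, and their inner product `i τ Σ |h_n|² c_n` does not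
depend on `ω` because the phases `e^{iωc_n}` cancel. For unit vectors `u, v`,
`‖g₁ u + g₂ v‖² = 1 + 2 Re(ḡ₁ g₂ ⟪u, v⟫) ≥ 1 - 2 |g₁| |g₂| |⟪u, v⟫| ≥ 1 - |⟪u, v⟫|`,
with equality when `|g₁| = |g₂| = 1/√2` and the phase of `ḡ₁ g₂` is opposite to that of `⟪u, v⟫`.
-/

open Complex
open scoped ComplexConjugate ComplexInnerProductSpace

theorem norm_exp_I_mul_ofReal_mul (x y : ℝ) : ‖exp (I * (x * y))‖ = 1 := by
  rw [← ofReal_mul, norm_exp_I_mul_ofReal]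

section UnitPair

variable {E : Type*} [NormedAddCommGroup E] [InnerProductSpace ℂ E]

theorem norm_smul_add_smul_sq (a b : ℂ) (u v : E) :
    ‖a • u + b • v‖ ^ 2 = ‖a‖ ^ 2 * ‖u‖ ^ 2 + ‖b‖ ^ 2 * ‖v‖ ^ 2
      + 2 * (conj a * b * ⟪u, v⟫).re := by
  rw [norm_add_sq (𝕜 := ℂ), inner_smul_left, inner_smul_right, norm_smul, norm_smul]
  simp only [RCLike.re_to_complex]
  ring_nf

theorem isLeast_norm_smul_add_smul_sq {u v : E} (hu : ‖u‖ = 1) (hv : ‖v‖ = 1) :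
    IsLeast {t : ℝ | ∃ a b : ℂ, ‖a‖ ^ 2 + ‖b‖ ^ 2 = 1 ∧ t = ‖a • u + b • v‖ ^ 2}
      (1 - ‖⟪u, v⟫‖) := by
  set z := ⟪u, v⟫
  constructor
  · set s : ℝ := √2⁻¹
    have hs : s ^ 2 = 2⁻¹ := Real.sq_sqrt (by norm_num)
    have hnorm_s : ‖(s : ℂ)‖ = s := by rw [norm_real, Real.norm_of_nonneg (Real.sqrt_nonneg _)]
    have hnorm_b : ‖-s * exp (-(arg z : ℂ) * I)‖ = s := by
      rw [norm_mul, norm_neg, hnorm_s, ← ofReal_neg, norm_exp_ofReal_mul_I, mul_one]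
    have hphase : exp (-(arg z : ℂ) * I) * z = ‖z‖ := by
      calc exp (-(arg z : ℂ) * I) * z
          = exp (-(arg z : ℂ) * I) * (‖z‖ * exp (arg z * I)) := by rw [norm_mul_exp_arg_mul_I]
        _ = ‖z‖ := by rw [mul_left_comm, ← exp_add, neg_mul, neg_add_cancel, exp_zero, mul_one]
    have hcross :
        conj (s : ℂ) * (-s * exp (-(arg z : ℂ) * I)) * z = ((-(s ^ 2 * ‖z‖) : ℝ) : ℂ) := by
      rw [conj_ofReal, mul_assoc, mul_assoc, hphase]; push_cast; ring
    refine ⟨s, -s * exp (-(arg z : ℂ) * I), ?_, ?_⟩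
    · rw [hnorm_s, hnorm_b, hs]; norm_num
    · rw [norm_smul_add_smul_sq, hcross, ofReal_re, hu, hv, hnorm_s, hnorm_b, hs]
      ring
  · rintro t ⟨a, b, hab, rfl⟩
    have hre : -(‖a‖ * ‖b‖ * ‖z‖) ≤ (conj a * b * z).re := by
      simpa only [norm_mul, RCLike.norm_conj] using
        neg_le_of_abs_le (abs_re_le_norm (conj a * b * z))
    have hamgm : 2 * (‖a‖ * ‖b‖) ≤ 1 := by nlinarith [sq_nonneg (‖a‖ - ‖b‖)]
    rw [norm_smul_add_smul_sq, hu, hv]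
    nlinarith [norm_nonneg z]

end UnitPair

section WindowedSinusoid

variable {N : ℕ} (h : Fin N → ℂ) (ω : ℝ)

theorem norm_sinusoid : ‖sinusoid h ω‖ = √(∑ n, ‖h n‖ ^ 2) := by
  simp [EuclideanSpace.norm_eq, sinusoid, norm_exp_I_mul_ofReal_mul]

theorem norm_sinusoidD : ‖sinusoidD h ω‖ = √(∑ n, ‖h n‖ ^ 2 * cN N n ^ 2) := by
  simp [EuclideanSpace.norm_eq, sinusoidD, norm_exp_I_mul_ofReal_mul, mul_pow, mul_comm]

theorem inner_sinusoid_sinusoidD :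
    ⟪sinusoid h ω, sinusoidD h ω⟫ = I * ((∑ n, ‖h n‖ ^ 2 * cN N n : ℝ) : ℂ) := by
  rw [PiLp.inner_apply, ofReal_sum, Finset.mul_sum]
  refine Finset.sum_congr rfl fun n _ => ?_
  have hphase := norm_exp_I_mul_ofReal_mul ω (cN N n)
  simp only [sinusoid, sinusoidD, RCLike.inner_apply, map_mul]
  set e := exp (I * (ω * cN N n))
  calc _ = I * cN N n * (h n * conj (h n)) * (e * conj e) := by ring
    _ = _ := by rw [mul_conj', mul_conj', hphase]; push_cast; ring

theorem tauW_nonneg : 0 ≤ tauW h := by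
  unfold tauW; positivity

theorem norm_tauW_smul_sinusoidD (hpos : 0 < ∑ n, ‖h n‖ ^ 2 * cN N n ^ 2) :
    ‖(tauW h : ℂ) • sinusoidD h ω‖ = 1 := by
  rw [norm_smul, norm_real, Real.norm_eq_abs, abs_of_nonneg (tauW_nonneg h), norm_sinusoidD,
    tauW, inv_mul_cancel₀ (Real.sqrt_pos.2 hpos).ne']

end WindowedSinusoid

/-- The squared smallest singular value of the tangent-plane matrix `T(ω) = [x(ω), τ x′(ω)]`
equals `1 − τ |Σ_n |h_n|² c_n|`, independently of `ω`: it is the minimum of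
`‖g₁ x(ω) + g₂ τ x′(ω)‖²` over `(g₁,g₂) ∈ ℂ²` with `|g₁|² + |g₂|² = 1`. -/
theorem stmt10 {N : ℕ} (h : Fin N → ℂ) (hnorm : ∑ n, ‖h n‖ ^ 2 = 1)
    (hpos : 0 < ∑ n, ‖h n‖ ^ 2 * (cN N n) ^ 2) (ω : ℝ) :
    IsLeast {t : ℝ | ∃ g₁ g₂ : ℂ, ‖g₁‖ ^ 2 + ‖g₂‖ ^ 2 = 1 ∧
        t = ‖g₁ • sinusoid h ω + g₂ • ((tauW h : ℂ) • sinusoidD h ω)‖ ^ 2}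
      (1 - tauW h * |∑ n, ‖h n‖ ^ 2 * cN N n|) := by
  have hx : ‖sinusoid h ω‖ = 1 := by rw [norm_sinusoid, hnorm, Real.sqrt_one]
  have hinner : ‖⟪sinusoid h ω, (tauW h : ℂ) • sinusoidD h ω⟫‖
      = tauW h * |∑ n, ‖h n‖ ^ 2 * cN N n| := by
    rw [inner_smul_right, inner_sinusoid_sinusoidD, norm_mul, norm_mul, norm_I, one_mul,
      norm_real, norm_real, Real.norm_eq_abs, Real.norm_eq_abs, abs_of_nonneg (tauW_nonneg h)]
  rw [← hinner]
  exact isLeast_norm_smul_add_smul_sq hx (norm_tauW_smul_sinusoidD h ω hpos)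
end

section
/- Let N ∈ ℕ and let h₁,…,h_N ∈ ℂ be window weights with Σ_n |h_n|² = 1. Then for all ω, δ ∈ ℝ, the first-order Taylor remainder of the windowed sinusoid satisfies ‖x(ω + δ) − x(ω) − δ·x′(ω)‖ ≤ N²δ²/8. -/
open scoped BigOperators

open Complex ComplexConjugate

lemma norm_exp_I_mul_ofReal_sub_one_sub_I_mul_le_of_nonneg {t : ℝ} (ht : 0 ≤ t) :
    ‖exp (I * t) - 1 - I * t‖ ≤ t ^ 2 / 2 := by
  set f : ℝ → ℂ := fun s => exp (I * s) - 1 - I * s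
  have hf : ∀ s : ℝ, HasDerivAt f ((exp (I * s) - 1) * I) s := by
    intro s
    have hIs : HasDerivAt (fun s : ℝ => I * (s : ℂ)) I s := by
      simpa using (ofRealCLM.hasDerivAt (x := s)).const_mul I
    exact ((hIs.cexp.sub_const 1).sub hIs).congr_deriv (by ring)
  have hB : ∀ s : ℝ, HasDerivAt (fun s : ℝ => s ^ 2 / 2) s s := by
    intro s
    exact ((hasDerivAt_pow 2 s).div_const 2).congr_deriv (by norm_num)
  refine image_norm_le_of_norm_deriv_right_le_deriv_boundary (a := 0) (b := t)
    (fun s _ => (hf s).continuousAt.continuousWithinAt) (fun s _ => (hf s).hasDerivWithinAt)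
    (by simp [f]) hB (fun s hs => ?_) ⟨ht, le_rfl⟩
  calc ‖(exp (I * s) - 1) * I‖ = ‖exp (I * s) - 1‖ := by simp
    _ ≤ ‖s‖ := Real.norm_exp_I_mul_ofReal_sub_one_le
    _ = s := Real.norm_of_nonneg hs.1

lemma norm_exp_I_mul_ofReal_sub_one_sub_I_mul_le (t : ℝ) :
    ‖exp (I * t) - 1 - I * t‖ ≤ t ^ 2 / 2 := by
  rcases le_total 0 t with ht | ht
  · exact norm_exp_I_mul_ofReal_sub_one_sub_I_mul_le_of_nonneg ht
  · have hconj : exp (I * (-t : ℝ)) - 1 - I * (-t : ℝ) = conj (exp (I * t) - 1 - I * t) := by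
      rw [map_sub, map_sub, ← exp_conj]
      simp
    have h := norm_exp_I_mul_ofReal_sub_one_sub_I_mul_le_of_nonneg (neg_nonneg.2 ht)
    rwa [hconj, RCLike.norm_conj, neg_sq] at h

lemma EuclideanSpace.norm_le_mul_norm_of_forall_norm_apply_le {𝕜 ι : Type*} [RCLike 𝕜]
    [Fintype ι] {v w : EuclideanSpace 𝕜 ι} {B : ℝ} (hB : 0 ≤ B)
    (hvw : ∀ i, ‖v i‖ ≤ B * ‖w i‖) : ‖v‖ ≤ B * ‖w‖ := by
  refine (sq_le_sq₀ (norm_nonneg _) (by positivity)).1 ?_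
  rw [mul_pow, EuclideanSpace.norm_sq_eq, EuclideanSpace.norm_sq_eq, Finset.mul_sum]
  gcongr with i
  rw [← mul_pow]
  exact pow_le_pow_left₀ (norm_nonneg _) (hvw i) 2

lemma abs_cN_le {N : ℕ} (n : Fin N) : |cN N n| ≤ N / 2 := by
  have hn : (n : ℝ) + 1 ≤ N := by exact_mod_cast n.isLt
  rw [abs_le, cN]
  constructor <;> linarith [(n : ℕ).cast_nonneg (α := ℝ)]

lemma sinusoid_taylor_remainder_apply {N : ℕ} (h : Fin N → ℂ) (ω δ : ℝ) (n : Fin N) :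
    (sinusoid h (ω + δ) - sinusoid h ω - (δ : ℂ) • sinusoidD h ω) n =
      h n * exp (I * (ω * cN N n)) * (exp (I * (δ * cN N n : ℝ)) - 1 - I * (δ * cN N n : ℝ)) := by
  simp only [PiLp.sub_apply, PiLp.smul_apply, sinusoid, sinusoidD, smul_eq_mul]
  push_cast
  rw [add_mul, mul_add, exp_add]
  ring

/-- First-order Taylor remainder bound for the windowed sinusoid:
`‖x(ω+δ) − x(ω) − δ x′(ω)‖ ≤ N²δ²/8`. -/
theorem stmt13 {N : ℕ} (h : Fin N → ℂ) (hnorm : ∑ n, ‖h n‖ ^ 2 = 1) (ω δ : ℝ) :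
    ‖sinusoid h (ω + δ) - sinusoid h ω - (δ : ℂ) • sinusoidD h ω‖ ≤
      (N : ℝ) ^ 2 * δ ^ 2 / 8 := by
  have hh : ‖WithLp.toLp 2 h‖ = 1 := by
    rw [EuclideanSpace.norm_eq]
    simp [hnorm]
  have hentry : ∀ n, ‖(sinusoid h (ω + δ) - sinusoid h ω - (δ : ℂ) • sinusoidD h ω) n‖ ≤
      (N : ℝ) ^ 2 * δ ^ 2 / 8 * ‖(WithLp.toLp 2 h : EuclideanSpace ℂ (Fin N)) n‖ := by
    intro n
    obtain ⟨hc₁, hc₂⟩ := abs_le.1 (abs_cN_le n)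
    have hc : cN N n ^ 2 ≤ (N / 2 : ℝ) ^ 2 := sq_le_sq' hc₁ hc₂
    rw [sinusoid_taylor_remainder_apply, norm_mul, norm_mul, mul_comm (ω : ℂ),
      ← ofReal_mul, norm_exp_I_mul_ofReal, mul_one, mul_comm, PiLp.toLp_apply]
    gcongr
    calc _ ≤ (δ * cN N n) ^ 2 / 2 := norm_exp_I_mul_ofReal_sub_one_sub_I_mul_le _
      _ ≤ _ := by nlinarith [sq_nonneg δ]
  simpa [hh] using EuclideanSpace.norm_le_mul_norm_of_forall_norm_apply_le (by positivity) hentry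
end
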